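/- Let G be a group and N a normal subgroup such that the projection q : G → G/N admits a section homomorphism s : G/N → G. Then for every x ∈ [G,N]: cl_G(x) ≤ cl_{G,N}(x) ≤ 3·cl_G(x). -/

import Mathlib

/-!
Let `r = s ∘ q`, an endomorphism of `G` with `r g ≡ g` modulo `N`. Writing `a = r a · n` and
`b = r b · m` with `n, m ∈ N`, a commutator `[a, b]` equals `[r a, r b] = r [a, b]` times two
`(G,N)`-commutators. Peeling commutators off a product `x = c₁ ⋯ cₖ` one at a time,
conjugating the rest by `r cᵢ`, writes `x · (r x)⁻¹` as `2k` `(G,N)`-commutators; for `x ∈ N`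
we have `r x = 1`. So in fact `cl_{G,N}(x) ≤ 2·cl_G(x)`.
-/

variable {G : Type*} [Group G]

/-- `x` is a product of `m` `(G,N)`-commutators. -/
def IsCommProd (N : Subgroup G) (m : ℕ) (x : G) : Prop :=
  ∃ c : Fin m → G, (∀ i, ∃ g h : G, h ∈ N ∧ c i = g * h * g⁻¹ * h⁻¹) ∧
    (List.ofFn c).prod = x

/-- The `(G,N)`-commutator length; for `N = ⊤` this is the ordinary commutator length. -/
noncomputable def clGN (N : Subgroup G) (x : G) : ℕ :=
  sInf {m | IsCommProd N m x}

section CommutatorProducts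

variable {N M H : Subgroup G} {m k : ℕ} {x y : G}

def IsGNCommutator (N : Subgroup G) (y : G) : Prop :=
  ∃ g h : G, h ∈ N ∧ y = g * h * g⁻¹ * h⁻¹

theorem isCommProd_iff_exists_list :
    IsCommProd N m x ↔
      ∃ l : List G, l.length = m ∧ (∀ y ∈ l, IsGNCommutator N y) ∧ l.prod = x := by
  constructor
  · rintro ⟨c, hc, rfl⟩
    refine ⟨List.ofFn c, List.length_ofFn, fun y hy => ?_, rfl⟩
    obtain ⟨i, rfl⟩ := List.mem_ofFn.mp hy
    exact hc i
  · rintro ⟨l, rfl, hl, rfl⟩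
    exact ⟨l.get, fun i => hl _ (l.get_mem i), by rw [List.ofFn_get]⟩

namespace IsCommProd

theorem zero : IsCommProd N 0 1 :=
  isCommProd_iff_exists_list.mpr ⟨[], rfl, by simp, rfl⟩

theorem commutator (g : G) {h : G} (hh : h ∈ N) : IsCommProd N 1 (g * h * g⁻¹ * h⁻¹) :=
  isCommProd_iff_exists_list.mpr ⟨[_], rfl, by simpa using ⟨g, h, hh, rfl⟩, by simp⟩

theorem mul (hx : IsCommProd N m x) (hy : IsCommProd N k y) : IsCommProd N (m + k) (x * y) := by
  obtain ⟨l, rfl, hl, rfl⟩ := isCommProd_iff_exists_list.mp hx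
  obtain ⟨l', rfl, hl', rfl⟩ := isCommProd_iff_exists_list.mp hy
  refine isCommProd_iff_exists_list.mpr ⟨l ++ l', List.length_append, ?_, List.prod_append⟩
  simpa only [List.mem_append, or_imp, forall_and] using ⟨hl, hl'⟩

theorem conj [N.Normal] (hx : IsCommProd N m x) (g : G) : IsCommProd N m (g * x * g⁻¹) := by
  obtain ⟨l, rfl, hl, rfl⟩ := isCommProd_iff_exists_list.mp hx
  refine isCommProd_iff_exists_list.mpr ⟨l.map (MulAut.conj g), List.length_map _, ?_, ?_⟩
  · simp only [List.mem_map, forall_exists_index, and_imp, forall_apply_eq_imp_iff₂]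
    intro y hy
    obtain ⟨a, h, hh, rfl⟩ := hl y hy
    exact ⟨g * a * g⁻¹, g * h * g⁻¹, ‹N.Normal›.conj_mem h hh g, by simp; group⟩
  · rw [← map_list_prod, MulAut.conj_apply]

theorem inv (hx : IsCommProd N m x) : IsCommProd N m x⁻¹ := by
  obtain ⟨l, rfl, hl, rfl⟩ := isCommProd_iff_exists_list.mp hx
  refine isCommProd_iff_exists_list.mpr
    ⟨(l.map (·⁻¹)).reverse, by simp, ?_, (List.prod_inv_reverse l).symm⟩
  simp only [List.mem_reverse, List.mem_map, forall_exists_index, and_imp,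
    forall_apply_eq_imp_iff₂]
  intro y hy
  obtain ⟨g, h, hh, rfl⟩ := hl y hy
  exact ⟨h * g * h⁻¹, h⁻¹, inv_mem hh, by group⟩

theorem mono (hNM : N ≤ M) (hx : IsCommProd N m x) : IsCommProd M m x := by
  obtain ⟨c, hc, rfl⟩ := hx
  refine ⟨c, fun i => ?_, rfl⟩
  obtain ⟨g, h, hh, hc⟩ := hc i
  exact ⟨g, h, hNM hh, hc⟩

theorem induction_on {P : ℕ → G → Prop} (zero : P 0 1)
    (cons : ∀ m y z, IsGNCommutator N y → P m z → P (m + 1) (y * z))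
    (hx : IsCommProd N m x) : P m x := by
  obtain ⟨l, rfl, hl, rfl⟩ := isCommProd_iff_exists_list.mp hx
  clear hx
  induction l with
  | nil => exact zero
  | cons y l ih =>
    rw [List.prod_cons]
    exact cons _ y _ (hl y List.mem_cons_self) (ih fun z hz => hl z (List.mem_cons_of_mem y hz))

end IsCommProd

open scoped commutatorElement in
theorem exists_isCommProd_of_mem_commutator (hx : x ∈ ⁅H, N⁆) : ∃ m, IsCommProd N m x := by
  rw [Subgroup.commutator_def] at hx
  induction hx using Subgroup.closure_induction with
  | mem y hy =>
    obtain ⟨g, -, h, hh, rfl⟩ := hy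
    exact ⟨1, IsCommProd.commutator g hh⟩
  | one => exact ⟨0, IsCommProd.zero⟩
  | mul a b _ _ ha hb =>
    obtain ⟨m, ha⟩ := ha
    obtain ⟨k, hb⟩ := hb
    exact ⟨m + k, ha.mul hb⟩
  | inv a _ ha =>
    obtain ⟨m, ha⟩ := ha
    exact ⟨m, ha.inv⟩

section Retraction

variable [N.Normal] (r : G →* G) (hr : ∀ g, (r g)⁻¹ * g ∈ N)
include hr

theorem isCommProd_commutator_mul_inv_map (a b : G) :
    IsCommProd N 2 (a * b * a⁻¹ * b⁻¹ * (r (a * b * a⁻¹ * b⁻¹))⁻¹) := by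
  simp only [map_mul, map_inv]
  obtain ⟨n, hn, ha⟩ : ∃ n ∈ N, a = r a * n := ⟨(r a)⁻¹ * a, hr a, by group⟩
  obtain ⟨m, hm, hb⟩ : ∃ m ∈ N, b = r b * m := ⟨(r b)⁻¹ * b, hr b, by group⟩
  generalize r a = a' at ha ⊢
  generalize r b = b' at hb ⊢
  subst ha hb
  have split :
      a' * n * (b' * m) * (a' * n)⁻¹ * (b' * m)⁻¹ * (a' * b' * a'⁻¹ * b'⁻¹)⁻¹ =
      a' * (b' * m * n * (b' * m)⁻¹ * n⁻¹)⁻¹ * a'⁻¹ *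
        ((a' * b' * a'⁻¹ * b'⁻¹ * b') * (a' * m * a'⁻¹ * m⁻¹) *
          (a' * b' * a'⁻¹ * b'⁻¹ * b')⁻¹) := by
    group
  rw [split]
  exact ((IsCommProd.commutator _ hn).inv.conj a').mul ((IsCommProd.commutator a' hm).conj _)

theorem IsCommProd.mul_inv_map (hx : IsCommProd ⊤ m x) :
    IsCommProd N (2 * m) (x * (r x)⁻¹) := by
  refine hx.induction_on (P := fun m x => IsCommProd N (2 * m) (x * (r x)⁻¹))
    (by simpa using IsCommProd.zero) ?_
  rintro n y z hy hz
  obtain ⟨a, b, -, rfl⟩ := hy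
  have split : a * b * a⁻¹ * b⁻¹ * z * (r (a * b * a⁻¹ * b⁻¹ * z))⁻¹ =
      a * b * a⁻¹ * b⁻¹ * (r (a * b * a⁻¹ * b⁻¹))⁻¹ *
        (r (a * b * a⁻¹ * b⁻¹) * (z * (r z)⁻¹) * (r (a * b * a⁻¹ * b⁻¹))⁻¹) := by
    rw [map_mul r _ z]
    group
  rw [split, mul_add_one, add_comm]
  exact (isCommProd_commutator_mul_inv_map r hr a b).mul (hz.conj _)

end Retraction

theorem clGN_le (hx : IsCommProd N m x) : clGN N x ≤ m :=
  Nat.sInf_le hx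

theorem isCommProd_clGN (hx : IsCommProd N m x) : IsCommProd N (clGN N x) x :=
  Nat.sInf_mem (s := {m | IsCommProd N m x}) ⟨m, hx⟩

theorem clGN_le_two_mul_clGN_top [N.Normal] (r : G →* G) (hr : ∀ g, (r g)⁻¹ * g ∈ N)
    (hrx : r x = 1) (hx : IsCommProd ⊤ m x) : clGN N x ≤ 2 * clGN ⊤ x :=
  clGN_le <| by simpa [hrx] using (isCommProd_clGN hx).mul_inv_map r hr

end CommutatorProducts

/-- If the projection `G → G/N` has a homomorphic section, then
`cl_G(x) ≤ cl_{G,N}(x) ≤ 3·cl_G(x)` for every `x ∈ [G,N]`. -/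
theorem cl_equivalence_section (N : Subgroup G) [hN : N.Normal]
    (s : G ⧸ N →* G) (hs : ∀ q : G ⧸ N, QuotientGroup.mk' N (s q) = q)
    (x : G) (hx : x ∈ ⁅(⊤ : Subgroup G), N⁆) :
    clGN (⊤ : Subgroup G) x ≤ clGN N x ∧ clGN N x ≤ 3 * clGN (⊤ : Subgroup G) x := by
  obtain ⟨m, hm⟩ := exists_isCommProd_of_mem_commutator hx
  refine ⟨clGN_le ((isCommProd_clGN hm).mono le_top), ?_⟩
  have hr : ∀ g, (s (QuotientGroup.mk' N g))⁻¹ * g ∈ N := fun g =>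
    QuotientGroup.eq.mp (hs (QuotientGroup.mk' N g))
  have hrx : s (QuotientGroup.mk' N x) = 1 := by
    rw [QuotientGroup.mk'_apply,
      (QuotientGroup.eq_one_iff x).mpr (Subgroup.commutator_le_right ⊤ N hx), map_one]
  calc clGN N x ≤ 2 * clGN ⊤ x :=
        clGN_le_two_mul_clGN_top (s.comp (QuotientGroup.mk' N)) hr hrx (hm.mono le_top)
    _ ≤ 3 * clGN ⊤ x := by omega
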